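/- arXiv:1701.06949 — 4 statements merged into one kernel-verified Lean document; each statement's English description precedes it below -/
import Mathlib

section
/- Let G be a finite group and V an abelian normal 2-subgroup of G with C_G(V) ≤ V. If α is an automorphism of G with [V,α] = 1 (i.e. α fixes V pointwise) and α² inner, then [G,α] ≤ V, i.e. α(g)g⁻¹ ∈ V for all g ∈ G. -/
/-! `g⁻¹ v g ∈ V` is fixed by `α`, so conjugation by `α g` and by `g` agree on `V`; hence
`α g * g⁻¹` centralizes `V`, and `C_G(V) ≤ V` finishes. -/

theorem MulAut.apply_mul_inv_mem_centralizer {G : Type*} [Group G] {N : Subgroup G}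
    (hN : N.Normal) (α : MulAut G) (hα : ∀ n ∈ N, α n = n) (g : G) :
    α g * g⁻¹ ∈ Subgroup.centralizer (N : Set G) := by
  rw [Subgroup.mem_centralizer_iff]
  intro v hv
  have hfixed : α (g⁻¹ * v * g) = g⁻¹ * v * g := by
    simpa only [inv_inv] using hα _ (hN.conj_mem v hv g⁻¹)
  rw [map_mul, map_mul, map_inv, hα v hv] at hfixed
  calc v * (α g * g⁻¹) = α g * ((α g)⁻¹ * v * α g) * g⁻¹ := by group
    _ = α g * g⁻¹ * v := by rw [hfixed]; group

theorem stmt0_general {G : Type*} [Group G] (V : Subgroup G)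
    (hVnorm : V.Normal)
    (hCent : Subgroup.centralizer (V : Set G) ≤ V)
    (α : MulAut G) (hfix : ∀ v ∈ V, α v = v) :
    ∀ g : G, α g * g⁻¹ ∈ V :=
  fun g => hCent (α.apply_mul_inv_mem_centralizer hVnorm hfix g)

/-- Let `G` be a finite group and `V` an abelian normal 2-subgroup of `G`
with `C_G(V) ≤ V`. If `α` is an automorphism of `G` fixing `V` pointwise such that `α²`
is inner, then `[G, α] ≤ V`, i.e. `α g * g⁻¹ ∈ V` for all `g ∈ G`. -/
theorem stmt0 {G : Type*} [Group G] [Finite G] (V : Subgroup G)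
    (hVab : IsMulCommutative V) (hVnorm : V.Normal) (hV2 : IsPGroup 2 V)
    (hCent : Subgroup.centralizer (V : Set G) ≤ V)
    (α : MulAut G) (hfix : ∀ v ∈ V, α v = v)
    (hinner : ∃ u : G, α ^ 2 = MulAut.conj u) :
    ∀ g : G, α g * g⁻¹ ∈ V :=
  stmt0_general V hVnorm hCent α hfix
end

section
/- Let G be a finite group and V an abelian normal 2-subgroup of G with C_G(V) ≤ V, such that G acts fixed point freely on V/Φ(V) by conjugation. If α is an automorphism of G fixing V pointwise with α² inner, then the order of α is at most the exponent of V. -/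
/-- Let `G` be a finite group and `V` an abelian normal 2-subgroup of `G` with
`C_G(V) ≤ V`, such that the conjugation action of `G` on `V/Φ(V)` is fixed point free.
If `α` is an automorphism of `G` fixing `V` pointwise with `α²` inner, then the order of
`α` is at most the exponent of `V`. -/
theorem stmt1 {G : Type*} [Group G] [Finite G] (V : Subgroup G)
    (hVab : IsMulCommutative ↥V) (hVnorm : V.Normal) (hV2 : IsPGroup 2 V)
    (hCent : Subgroup.centralizer (V : Set G) ≤ V)
    -- `G` acts fixed point freely on `V/Φ(V)` : any element of `V` whose conjugacy
    -- action of `G` fixes its coset modulo `Φ(V)` lies in `Φ(V)`.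
    (hfpf : ∀ v ∈ V, (∀ g : G, (g * v * g⁻¹) * v⁻¹ ∈ (frattini ↥V).map V.subtype) →
      v ∈ (frattini ↥V).map V.subtype)
    (α : MulAut G) (hfix : ∀ v ∈ V, α v = v)
    (hinner : ∃ u : G, α ^ 2 = MulAut.conj u) :
    orderOf α ≤ Monoid.exponent ↥V := by
  -- For each g, the "cocycle" g⁻¹ * α g centralizes V, hence lies in V.
  have hcV : ∀ g : G, g⁻¹ * α g ∈ V := by
    intro g
    apply hCent
    rw [Subgroup.mem_centralizer_iff]
    intro v hv
    have h1 : α (g * v * g⁻¹) = g * v * g⁻¹ := hfix _ (hVnorm.conj_mem v hv g)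
    have h2 : α g * v * (α g)⁻¹ = g * v * g⁻¹ := by
      have hv' : α v = v := hfix v hv
      calc α g * v * (α g)⁻¹ = α (g * v * g⁻¹) := by
            rw [map_mul, map_mul, map_inv, hv']
        _ = g * v * g⁻¹ := h1
    calc v * (g⁻¹ * α g) = g⁻¹ * (g * v * g⁻¹) * α g := by group
      _ = g⁻¹ * (α g * v * (α g)⁻¹) * α g := by rw [h2]
      _ = g⁻¹ * α g * v := by group
  have hfixc : ∀ g : G, α (g⁻¹ * α g) = g⁻¹ * α g := fun g => hfix _ (hcV g)
  have key : ∀ n : ℕ, ∀ g : G, (α ^ n) g = g * (g⁻¹ * α g) ^ n := by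
    intro n
    induction n with
    | zero => intro g; simp
    | succ n ih =>
      intro g
      have hp : α ^ (n + 1) = α * α ^ n := (pow_succ' α n)
      rw [hp, MulAut.mul_apply, ih, map_mul, map_pow, hfixc, pow_succ']
      rw [← mul_assoc g, mul_inv_cancel_left]
  have hpow : α ^ Monoid.exponent ↥V = 1 := by
    ext g
    rw [key, MulAut.one_apply]
    have hx : ((⟨g⁻¹ * α g, hcV g⟩ : V) ^ Monoid.exponent ↥V : V) = 1 :=
      Monoid.pow_exponent_eq_one _
    have hx' : (g⁻¹ * α g) ^ Monoid.exponent ↥V = 1 := by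
      have := congrArg (Subgroup.subtype V) hx
      simpa using this
    rw [hx', mul_one]
  have hpos : 0 < Monoid.exponent ↥V := Nat.pos_of_ne_zero Monoid.exponent_ne_zero_of_finite
  exact Nat.le_of_dvd hpos (orderOf_dvd_of_pow_eq_one hpow)
end

section
/- In the setting of the previous lemma's proof: if G is a finite group, V an abelian normal 2-subgroup with C_G(V) ≤ V, α an automorphism of G fixing V pointwise with α² = conjugation by some u ∈ V, then in the semidirect product G* = G ⋊ ⟨α⟩, the subgroup W = V⟨α⟩ is an abelian normal subgroup of G* with [W, G*] ≤ V. -/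
/-!
Since `α` fixes both `v ∈ V` and its conjugate `g⁻¹ v g`, the element `α g * g⁻¹` centralizes `V`,
hence lies in `V`. In `G ⋊ ⟨α⟩` this says that `α` is central modulo `V`; so is `V` itself, which is
normal there because `⟨α⟩` fixes it. Hence `[W, G*] ≤ V ≤ W`, which also makes `W` normal, and `W`
is abelian because its generators commute.
-/

open SemidirectProduct
open scoped commutatorElement

theorem MulAut.apply_mul_inv_mem_of_centralizer_le {G : Type*} [Group G] {V : Subgroup G}
    (hV : V.Normal) (hCent : Subgroup.centralizer (V : Set G) ≤ V) {α : MulAut G}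
    (hfix : ∀ v ∈ V, α v = v) (g : G) : α g * g⁻¹ ∈ V := by
  refine hCent (Subgroup.mem_centralizer_iff.2 fun v hv => ?_)
  have hconj : g⁻¹ * v * g ∈ V := by simpa using hV.conj_mem v hv g⁻¹
  have key : α g * (g⁻¹ * v * g) = v * α g := by
    rw [← hfix _ hconj, ← map_mul, show g * (g⁻¹ * v * g) = v * g by group, map_mul, hfix v hv]
  calc v * (α g * g⁻¹) = α g * (g⁻¹ * v * g) * g⁻¹ := by rw [key]; group
    _ = α g * g⁻¹ * v := by group

namespace SemidirectProduct

variable {N H : Type*} [Group N] [Group H] {φ : H →* MulAut N}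

theorem commute_inl_inr {n : N} {h : H} (hn : φ h n = n) :
    Commute (inl n : N ⋊[φ] H) (inr h) := by
  ext <;> simp [hn]

variable {V : Subgroup N}

theorem normal_map_inl (hV : V.Normal) (hφ : ∀ h, ∀ v ∈ V, φ h v ∈ V) :
    (V.map (inl : N →* N ⋊[φ] H)).Normal := by
  refine ⟨fun _ hn x => ?_⟩
  obtain ⟨v, hv, rfl⟩ := hn
  refine ⟨x.left * φ x.right v * x.left⁻¹, hV.conj_mem _ (hφ _ _ hv) _, ?_⟩
  apply SemidirectProduct.ext <;> simp

theorem commutatorElement_inr_mem_map_inl {a : H} (ha : a ∈ Subgroup.center H)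
    (haV : ∀ n, φ a n * n⁻¹ ∈ V) (x : N ⋊[φ] H) :
    ⁅(inr a : N ⋊[φ] H), x⁆ ∈ V.map (inl : N →* N ⋊[φ] H) := by
  have hax : a * x.right * a⁻¹ = x.right := by
    rw [← Subgroup.mem_center_iff.mp ha x.right, mul_inv_cancel_right]
  refine ⟨φ a x.left * x.left⁻¹, haV _, ?_⟩
  apply SemidirectProduct.ext <;> simp [commutatorElement_def, hax]

end SemidirectProduct

theorem stmt2_general {G : Type*} [Group G] (V : Subgroup G)
    (hVab : IsMulCommutative V) (hVnorm : V.Normal)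
    (hCent : Subgroup.centralizer (V : Set G) ≤ V)
    (α : MulAut G) (hfix : ∀ v ∈ V, α v = v) :
    letI Gstar := G ⋊[(Subgroup.zpowers α).subtype] ↥(Subgroup.zpowers α)
    ∀ W : Subgroup Gstar,
      W = Subgroup.closure
          ((inl '' (V : Set G)) ∪ {inr ⟨α, Subgroup.mem_zpowers α⟩}) →
      IsMulCommutative W ∧ W.Normal ∧
        ⁅W, (⊤ : Subgroup Gstar)⁆ ≤ V.map inl := by
  intro W hW
  have hfixA : ∀ β : Subgroup.zpowers α, ∀ v ∈ V, (β : MulAut G) v = v := fun β =>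
    (mem_fixingSubgroup_iff _).mp
      (Subgroup.zpowers_le.mpr ((mem_fixingSubgroup_iff _).mpr hfix) β.2)
  have := normal_map_inl (φ := (Subgroup.zpowers α).subtype) hVnorm
    fun β v hv => (hfixA β v hv).symm ▸ hv
  have hW_central : W ≤ Subgroup.upperCentralSeriesStep (V.map inl) := by
    rw [hW, Subgroup.closure_le]
    rintro _ (⟨v, hv, rfl⟩ | rfl) x
    · exact Subgroup.commutator_le_left _ ⊤
        (Subgroup.commutator_mem_commutator ⟨v, hv, rfl⟩ (Subgroup.mem_top x))
    · exact commutatorElement_inr_mem_map_inl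
        (by rw [Subgroup.center_eq_top]; exact Subgroup.mem_top _)
        (MulAut.apply_mul_inv_mem_of_centralizer_le hVnorm hCent hfix) x
  have hcomm : ⁅W, ⊤⁆ ≤ V.map inl :=
    Subgroup.commutator_le.mpr fun w hw x _ => hW_central hw x
  have hVW : V.map inl ≤ W := by
    rw [hW, Subgroup.map_le_iff_le_comap]
    exact fun v hv => Subgroup.subset_closure (Or.inl ⟨v, hv, rfl⟩)
  refine ⟨?_, Subgroup.commutator_top_right_le_iff.mp (hcomm.trans hVW), hcomm⟩
  rw [hW]
  refine Subgroup.isMulCommutative_closure ?_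
  rintro _ (⟨v, hv, rfl⟩ | rfl) _ (⟨w, hw, rfl⟩ | rfl)
  · rw [← map_mul, ← map_mul, setLike_mul_comm hv hw]
  · exact commute_inl_inr (hfix v hv)
  · exact (commute_inl_inr (hfix w hw)).symm
  · rfl

/-- `G` finite, `V` an abelian normal 2-subgroup with `C_G(V) ≤ V`,
`α` an automorphism of `G` fixing `V` pointwise with `α² = c_u` for some `u ∈ V`.
Then in the semidirect product `G* = G ⋊ ⟨α⟩`, the subgroup `W = V⟨α⟩` is an abelian
normal subgroup of `G*` with `[W, G*] ≤ V` (identifying `V` with its image in `G*`). -/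
theorem stmt2 {G : Type*} [Group G] [Finite G] (V : Subgroup G)
    (hVab : IsMulCommutative V) (hVnorm : V.Normal) (hV2 : IsPGroup 2 V)
    (hCent : Subgroup.centralizer (V : Set G) ≤ V)
    (α : MulAut G) (hfix : ∀ v ∈ V, α v = v)
    (u : G) (hu : u ∈ V) (hα2 : α ^ 2 = MulAut.conj u) :
    letI Gstar := G ⋊[(Subgroup.zpowers α).subtype] ↥(Subgroup.zpowers α)
    ∀ W : Subgroup Gstar,
      W = Subgroup.closure
          ((inl '' (V : Set G)) ∪ {inr ⟨α, Subgroup.mem_zpowers α⟩}) →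
      IsMulCommutative W ∧ W.Normal ∧
        ⁅W, (⊤ : Subgroup Gstar)⁆ ≤ V.map inl :=
  stmt2_general V hVab hVnorm hCent α hfix
end

section
/- Let F be a saturated fusion system over a finite p-group S and F₀ a weakly normal subsystem over S₀ ≤ S. If O^p(Aut_F(S₀)) ≤ Aut_{F₀}(S₀), then O^p(Aut_F(P)) ≤ Aut_{F₀}(P) for every P ≤ S₀; equivalently, Aut_F(P)/Aut_{F₀}(P) is a p-group for all P ≤ S₀. -/
/-!
A formalization of saturated fusion systems sufficient for Lemma 4.1 of the paper.
A fusion system over a subgroup `S₀` of a finite `p`-group `S` is recorded by giving,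
for each `P ≤ S`, the set of morphisms out of `P`, viewed as injective group
homomorphisms `↥P →* S` (the codomain of such a morphism being any subgroup
containing its range).
-/

/-- A fusion system over the subgroup `S₀` of the group `S`. -/
structure FusionSystemOn (S : Type*) [Group S] (S₀ : Subgroup S) where
  /-- The morphisms with source `P`. -/
  Hom : (P : Subgroup S) → Set (↥P →* S)
  /-- Morphisms exist only out of subgroups of `S₀`. -/
  dom_le : ∀ P : Subgroup S, (Hom P).Nonempty → P ≤ S₀
  /-- Morphisms take values in `S₀`. -/
  rng_le : ∀ (P : Subgroup S), ∀ φ ∈ Hom P, ∀ x : ↥P, φ x ∈ S₀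
  /-- All morphisms are injective. -/
  inj : ∀ (P : Subgroup S), ∀ φ ∈ Hom P, Function.Injective φ
  /-- All conjugation maps by elements of `S₀` are morphisms
  (so the fusion system contains `F_{S₀}(S₀)`). -/
  conj_mem : ∀ g ∈ S₀, ∀ P : Subgroup S, P ≤ S₀ →
      (MulAut.conj g).toMonoidHom.comp P.subtype ∈ Hom P
  /-- Morphisms are closed under composition. -/
  comp_mem : ∀ (P Q : Subgroup S) (φ : ↥P →* S) (hQ : ∀ x : ↥P, φ x ∈ Q),
      φ ∈ Hom P → ∀ ψ ∈ Hom Q, ψ.comp (φ.codRestrict Q hQ) ∈ Hom P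
  /-- Morphisms are closed under restriction. -/
  restrict_mem : ∀ (P P' : Subgroup S) (h : P' ≤ P), ∀ φ ∈ Hom P,
      φ.comp (Subgroup.inclusion h) ∈ Hom P'
  /-- Inverses of isomorphisms in the system are in the system. -/
  inv_mem : ∀ (P Q : Subgroup S) (e : ↥P ≃* ↥Q),
      Q.subtype.comp e.toMonoidHom ∈ Hom P →
      P.subtype.comp e.symm.toMonoidHom ∈ Hom Q

namespace FusionSystemOn

variable {S : Type*} [Group S] {S₀ : Subgroup S}

/-- `Aut_F(P)`, as a subgroup of the automorphism group of `P`. -/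
def AutF (F : FusionSystemOn S S₀) (P : Subgroup S) (hP : P ≤ S₀) :
    Subgroup (MulAut ↥P) where
  carrier := {α | P.subtype.comp α.toMonoidHom ∈ F.Hom P}
  one_mem' := by
    have h := F.conj_mem 1 S₀.one_mem P hP
    have : (MulAut.conj (1 : S)).toMonoidHom.comp P.subtype
        = P.subtype.comp (1 : MulAut ↥P).toMonoidHom := by
      ext x; simp
    rwa [this] at h
  mul_mem' := by
    intro a b ha hb
    have hQ : ∀ x : ↥P, (P.subtype.comp b.toMonoidHom) x ∈ P := fun x => (b x).2
    have h := F.comp_mem P P (P.subtype.comp b.toMonoidHom) hQ hb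
      (P.subtype.comp a.toMonoidHom) ha
    have heq : (P.subtype.comp a.toMonoidHom).comp
        ((P.subtype.comp b.toMonoidHom).codRestrict P hQ)
        = P.subtype.comp (a * b).toMonoidHom := by
      ext x; rfl
    rwa [heq] at h
  inv_mem' := by
    intro a ha
    exact F.inv_mem P P (a : ↥P ≃* ↥P) ha

/-- `Aut_{S₀}(P)`: the automorphisms of `P` induced by conjugation by elements of
`N_{S₀}(P)`. -/
def AutSub (S₀ : Subgroup S) (P : Subgroup S) : Subgroup (MulAut ↥P) where
  carrier := {α | ∃ g ∈ S₀ ⊓ Subgroup.normalizer (P : Set S), ∀ x : ↥P, ((α x : ↥P) : S) = g * x * g⁻¹}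
  one_mem' := ⟨1, one_mem _, by simp⟩
  mul_mem' := by
    rintro a b ⟨g, hg, hga⟩ ⟨k, hk, hkb⟩
    refine ⟨g * k, mul_mem hg hk, fun x => ?_⟩
    have : ((a (b x) : ↥P) : S) = g * (b x) * g⁻¹ := hga (b x)
    rw [show ((a * b) x) = a (b x) from rfl, this, hkb x]
    group
  inv_mem' := by
    rintro a ⟨g, hg, hga⟩
    refine ⟨g⁻¹, (S₀ ⊓ Subgroup.normalizer (P : Set S)).inv_mem hg, fun x => ?_⟩
    have h := hga (a⁻¹ x)
    rw [show a ((a⁻¹ : MulAut ↥P) x) = x from MulAut.apply_inv_self _ a x] at h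
    rw [h]; group

/-- `P` is fully normalized in the fusion system `F` over `S₀`: the normalizer
`N_{S₀}(P)` has maximal order among `N_{S₀}(Q)` for `Q` `F`-isomorphic to `P`. -/
def FullyNormalized (F : FusionSystemOn S S₀) (P : Subgroup S) : Prop :=
  ∀ (Q : Subgroup S) (e : ↥P ≃* ↥Q), Q.subtype.comp e.toMonoidHom ∈ F.Hom P →
    Nat.card ↥(S₀ ⊓ Subgroup.normalizer (Q : Set S)) ≤ Nat.card ↥(S₀ ⊓ Subgroup.normalizer (P : Set S))

/-- `P` is fully automized in `F`: `Aut_{S₀}(P)` is a Sylow `p`-subgroup of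
`Aut_F(P)`. -/
def FullyAutomized (p : ℕ) (F : FusionSystemOn S S₀) (P : Subgroup S)
    (hP : P ≤ S₀) : Prop :=
  ¬ p ∣ ((AutSub S₀ P).subgroupOf (F.AutF P hP)).index

/-- `Q` is receptive in `F`: every `F`-isomorphism `e : P → Q` extends to any subgroup
`R` with `P ≤ R` and `R` contained in the subgroup `N_e ≤ N_{S₀}(P)` of elements whose
conjugation action is transported by `e` into `Aut_{S₀}(Q)`. -/
def Receptive (F : FusionSystemOn S S₀) (Q : Subgroup S) : Prop :=
  ∀ (P : Subgroup S) (e : ↥P ≃* ↥Q), Q.subtype.comp e.toMonoidHom ∈ F.Hom P →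
  ∀ (R : Subgroup S) (hPR : P ≤ R),
    (∀ g ∈ R, g ∈ S₀ ∧ g ∈ Subgroup.normalizer (P : Set S) ∧ ∃ h ∈ S₀ ⊓ Subgroup.normalizer (Q : Set S),
      ∀ (x : ↥P) (hgx : (g * x * g⁻¹ : S) ∈ P),
        ((e ⟨g * x * g⁻¹, hgx⟩ : ↥Q) : S) = h * (e x) * h⁻¹) →
    ∃ ψ ∈ F.Hom R, ∀ x : ↥P, ψ ⟨(x : S), hPR x.2⟩ = ((e x : ↥Q) : S)

/-- Saturation: every fully normalized subgroup is fully automized and receptive. -/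
def Saturated (p : ℕ) (F : FusionSystemOn S S₀) : Prop :=
  ∀ (P : Subgroup S) (hP : P ≤ S₀), F.FullyNormalized P →
    F.FullyAutomized p P hP ∧ F.Receptive P

/-- `F₀` (over `S₀`) is weakly normal in `F` (over `S`): `F₀ ⊆ F`, `S₀` is strongly
closed in `F`, `F₀` is saturated, and `F₀` is `F`-invariant: for any `φ ∈ Hom_F(Q,S₀)`
and `ψ ∈ Hom_{F₀}(P,Q)` with `P ≤ Q ≤ S₀`, the conjugate `φ ∘ ψ ∘ (φ|_P)⁻¹` lies in
`F₀`. -/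
def WeaklyNormal (p : ℕ) (F : FusionSystemOn S (⊤ : Subgroup S))
    (F₀ : FusionSystemOn S S₀) : Prop :=
  (∀ P : Subgroup S, F₀.Hom P ⊆ F.Hom P) ∧
  (∀ (P : Subgroup S), P ≤ S₀ → ∀ φ ∈ F.Hom P, ∀ x : ↥P, φ x ∈ S₀) ∧
  F₀.Saturated p ∧
  (∀ (Q : Subgroup S), Q ≤ S₀ → ∀ φ ∈ F.Hom Q, (∀ x : ↥Q, φ x ∈ S₀) →
   ∀ (P : Subgroup S) (hPQ : P ≤ Q), ∀ ψ ∈ F₀.Hom P, ∀ (hψQ : ∀ x : ↥P, ψ x ∈ Q)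
     (hinj : Function.Injective (φ.comp (Subgroup.inclusion hPQ))),
     ((φ.comp (ψ.codRestrict Q hψQ)).comp
         (MonoidHom.ofInjective hinj).symm.toMonoidHom)
       ∈ F₀.Hom (φ.comp (Subgroup.inclusion hPQ)).range)

end FusionSystemOn

/-- `O^p(G)`: the smallest normal subgroup of `G` with quotient a `p`-group. -/
def pResidual (p : ℕ) (G : Type*) [Group G] : Subgroup G :=
  ⨅ N ∈ {N : Subgroup G | N.Normal ∧ ∀ g : G, ∃ n : ℕ, g ^ p ^ n ∈ N}, N


/-!
Every `α ∈ Aut_F(P)` has a `p`-power in `Aut_{F₀}(P)`, and `Aut_{F₀}(P)` is normal in `Aut_F(P)`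
by `F`-invariance; so `Aut_F(P) / Aut_{F₀}(P)` is a `p`-group, which is to say that
`O^p(Aut_F(P)) ≤ Aut_{F₀}(P)`.

The power statement is proved by downward induction on `|P|`; for `P = S₀` it is the hypothesis.
Otherwise it may be checked on a fully `F`-normalized `F`-conjugate `Q` of `P`, since it is
transported along `F`-isomorphisms. Such a `Q` is fully `F₀`-normalized as well, so `Aut_{S₀}(Q)`
is a Sylow subgroup of `Aut_{F₀}(Q)`, and the Frattini argument turns any `β ∈ Aut_F(Q)`, modulo
`Aut_{F₀}(Q)`, into some `γ` normalizing `Aut_{S₀}(Q)`. By receptivity of `Q`, `γ` extends to an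
`F`-automorphism of `N_{S₀}(Q) > Q`; by induction a `p`-power of the extension lies in `F₀`, and
restricting it to `Q` gives the required power of `γ`, hence of `β`.
-/

open Subgroup

section GroupTheory

variable {G : Type*} [Group G] {p : ℕ}

theorem pResidual_le {K : Subgroup G} (hK : K.Normal) (h : ∀ g : G, ∃ n, g ^ p ^ n ∈ K) :
    pResidual p G ≤ K :=
  iInf₂_le K ⟨hK, h⟩

theorem exists_pow_mem_pResidual [Finite G] [hp : Fact p.Prime] (g : G) :
    ∃ n, g ^ p ^ n ∈ pResidual p G := by
  refine ⟨(Nat.card G).factorization p, ?_⟩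
  simp only [pResidual, mem_iInf]
  rintro N ⟨-, hN⟩
  set h := g ^ p ^ (Nat.card G).factorization p
  obtain ⟨m, hm⟩ := hN h
  -- `h` has order prime to `p`, so it is a power of `h ^ p ^ m`
  have hord : orderOf h ∣ ordCompl[p] (Nat.card G) := by
    refine orderOf_dvd_of_pow_eq_one ?_
    rw [← pow_mul, Nat.ordProj_mul_ordCompl_eq_self, pow_card_eq_one']
  have hcop : (p ^ m).Coprime (orderOf h) :=
    ((Nat.coprime_ordCompl hp.out Nat.card_pos.ne').pow_left m).coprime_dvd_right hord
  obtain ⟨k, hk⟩ := exists_pow_eq_self_of_coprime hcop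
  exact hk ▸ N.pow_mem hm k

theorem Subgroup.mul_pow_mul_inv_pow_mem {K : Subgroup G} {a b : G}
    (ha : a ∈ normalizer (K : Set G)) (hb : b ∈ K) (n : ℕ) : (b * a) ^ n * (a ^ n)⁻¹ ∈ K := by
  induction n with
  | zero => simp
  | succ n ih =>
    have hconj := (mem_normalizer_iff.mp (pow_mem ha n) b).mp hb
    convert K.mul_mem ih hconj using 1
    rw [pow_succ, pow_succ]
    group

theorem MulAut.semiconj_pow {A B : Type*} [Group A] [Group B] {f : A → B} {γ : MulAut A}
    {α : MulAut B} (h : Function.Semiconj f γ α) (n : ℕ) :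
    Function.Semiconj f ⇑(γ ^ n) ⇑(α ^ n) := by
  induction n with
  | zero => exact Function.Semiconj.id_right
  | succ n ih => rw [pow_succ, pow_succ]; exact ih.comp_right h

theorem Subgroup.mem_normalizer_of_map_conj_le [Finite G] {H : Subgroup G} {g : G}
    (h : H.map (MulAut.conj g).toMonoidHom ≤ H) : g ∈ normalizer (H : Set G) :=
  mem_normalizer_iff_map_conj_eq.mpr
    (eq_of_le_of_card_ge h (card_map_of_injective (MulAut.conj g).injective).ge)

theorem MonoidHom.map_mem_normalizer_of_extends [Finite G] {P Q R : Subgroup G} (hQR : Q ≤ R)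
    {ψ : R →* G} {e : Q ≃* P} (hψ : ∀ x : Q, ψ (inclusion hQR x) = e x) {g : R}
    (hg : (g : G) ∈ normalizer (Q : Set G)) : ψ g ∈ normalizer (P : Set G) := by
  refine mem_normalizer_of_map_conj_le ?_
  rintro _ ⟨y, hy, rfl⟩
  obtain ⟨x, hx⟩ := e.surjective ⟨y, hy⟩
  obtain rfl : (e x : G) = y := congrArg Subtype.val hx
  have hgx : (g : G) * x * (g : G)⁻¹ ∈ Q := (mem_normalizer_iff.mp hg x).mp x.2
  have : g * inclusion hQR x * g⁻¹ = inclusion hQR ⟨_, hgx⟩ := rfl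
  simpa [← hψ, ← map_inv, ← map_mul, this] using (e ⟨_, hgx⟩).2

theorem IsPGroup.lt_inf_normalizer [Finite G] [Fact p.Prime] (hG : IsPGroup p G)
    {P T : Subgroup G} (h : P < T) : P < T ⊓ normalizer (P : Set G) := by
  have : Group.IsNilpotent T := (hG.to_subgroup T).isNilpotent
  have hP : P.subgroupOf T < ⊤ :=
    lt_top_iff_ne_top.mpr fun h' => h.not_ge (subgroupOf_eq_top.mp h')
  have hlt := Group.normalizerCondition_of_isNilpotent _ hP
  rw [← subgroupOf_normalizer_eq h.le, ← map_subtype_lt_map_subtype, subgroupOf_map_subtype,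
    subgroupOf_map_subtype, inf_of_le_left h.le, inf_comm] at hlt
  exact hlt

theorem Subgroup.exists_mem_map_conj_le [Finite G] [Fact p.Prime] {K U D : Subgroup G}
    (hU : IsPGroup p U) (hUi : ¬ p ∣ (U.subgroupOf K).index) (hDK : D ≤ K)
    (hD : IsPGroup p D) : ∃ k ∈ K, D.map (MulAut.conj k).toMonoidHom ≤ U := by
  obtain ⟨P, hDP⟩ := (hD.comap_of_injective K.subtype Subtype.coe_injective).exists_le_sylow
  obtain ⟨k, hk⟩ := MulAction.exists_smul_eq K P
    ((hU.comap_of_injective K.subtype Subtype.coe_injective).toSylow hUi)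
  refine ⟨k, k.2, ?_⟩
  rintro _ ⟨x, hx, rfl⟩
  have := Subgroup.smul_mem_pointwise_smul _ (MulAut.conj k) _
    (hDP (show (⟨x, hDK hx⟩ : K) ∈ D.comap K.subtype from hx))
  rw [← Sylow.coe_subgroup_smul, hk] at this
  simpa [mem_subgroupOf, mul_assoc] using this

/-- Frattini argument, for a subgroup `K` normalized (rather than normal) in the ambient group. -/
theorem Subgroup.exists_mem_mul_mem_normalizer [Finite G] [Fact p.Prime] {K U : Subgroup G}
    (hUK : U ≤ K) (hU : IsPGroup p U) (hUi : ¬ p ∣ (U.subgroupOf K).index) {g : G}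
    (hg : g ∈ normalizer (K : Set G)) : ∃ k ∈ K, k * g ∈ normalizer (U : Set G) := by
  have hUg : U.map (MulAut.conj g).toMonoidHom ≤ K :=
    (map_mono hUK).trans (mem_normalizer_iff_map_conj_eq.mp hg).le
  obtain ⟨k, hk, hle⟩ := exists_mem_map_conj_le hU hUi hUg (hU.map _)
  have hconj : (MulAut.conj (k * g)).toMonoidHom
      = (MulAut.conj k).toMonoidHom.comp (MulAut.conj g).toMonoidHom := by
    rw [map_mul]; rfl
  refine ⟨k, hk, mem_normalizer_of_map_conj_le ?_⟩
  rwa [hconj, ← map_map]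

end GroupTheory

namespace FusionSystemOn

variable {S : Type*} [Group S] {S₀ : Subgroup S} {p : ℕ}

theorem trans_mem (F : FusionSystemOn S S₀) {P Q R : Subgroup S} {u : P ≃* Q} {v : Q ≃* R}
    (hu : Q.subtype.comp u.toMonoidHom ∈ F.Hom P) (hv : R.subtype.comp v.toMonoidHom ∈ F.Hom Q) :
    R.subtype.comp (u.trans v).toMonoidHom ∈ F.Hom P :=
  F.comp_mem P Q _ (fun x => (u x).2) hu _ hv

theorem congr_mem_autF (F : FusionSystemOn S S₀) {P Q : Subgroup S} (hP : P ≤ S₀) (hQ : Q ≤ S₀)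
    {e : P ≃* Q} (he : Q.subtype.comp e.toMonoidHom ∈ F.Hom P) {α : MulAut P}
    (hα : α ∈ F.AutF P hP) : MulAut.congr e α ∈ F.AutF Q hQ :=
  F.trans_mem (F.inv_mem P Q e he) (F.trans_mem hα he)

theorem mem_autF_of_semiconj (F : FusionSystemOn S S₀) {Q R : Subgroup S} (hQR : Q ≤ R)
    (hR : R ≤ S₀) {α : MulAut R} (hα : α ∈ F.AutF R hR) {γ : MulAut Q}
    (h : Function.Semiconj (inclusion hQR) γ α) : γ ∈ F.AutF Q (hQR.trans hR) := by
  have heq : (R.subtype.comp α.toMonoidHom).comp (inclusion hQR) = Q.subtype.comp γ.toMonoidHom :=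
    MonoidHom.ext fun x => congrArg Subtype.val (h x).symm
  show Q.subtype.comp γ.toMonoidHom ∈ F.Hom Q
  exact heq ▸ F.restrict_mem R Q hQR _ hα

theorem exists_autF_of_mem_hom [Finite S] (F : FusionSystemOn S S₀) {R : Subgroup S}
    (hR : R ≤ S₀) {ψ : R →* S} (hψ : ψ ∈ F.Hom R) (hmaps : ∀ x, ψ x ∈ R) :
    ∃ α ∈ F.AutF R hR, ∀ x, (α x : S) = ψ x := by
  have hinj : Function.Injective (ψ.codRestrict R hmaps) :=
    fun _ _ h => F.inj R ψ hψ (congrArg Subtype.val h)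
  exact ⟨MulEquiv.ofBijective _ (Finite.injective_iff_bijective.mp hinj), hψ, fun _ => rfl⟩

theorem exists_fullyNormalized_iso [Finite S] (F : FusionSystemOn S S₀) {P : Subgroup S}
    (hP : P ≤ S₀) : ∃ (Q : Subgroup S) (u : P ≃* Q),
      Q.subtype.comp u.toMonoidHom ∈ F.Hom P ∧ F.FullyNormalized Q := by
  let C := {Q : Subgroup S // ∃ u : P ≃* Q, Q.subtype.comp u.toMonoidHom ∈ F.Hom P}
  have : Nonempty C := ⟨⟨P, MulEquiv.refl P, (F.AutF P hP).one_mem⟩⟩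
  obtain ⟨⟨Q, u, hu⟩, hmax⟩ :=
    Finite.exists_max fun c : C => Nat.card (S₀ ⊓ normalizer (c.1 : Set S) : Subgroup S)
  exact ⟨Q, u, hu, fun R v hv => hmax ⟨R, u.trans v, F.trans_mem hu hv⟩⟩

theorem autSub_mono {T T' : Subgroup S} (h : T ≤ T') (P : Subgroup S) :
    AutSub T P ≤ AutSub T' P :=
  fun _ ⟨g, hg, hga⟩ => ⟨g, inf_le_inf_right _ h hg, hga⟩

theorem normalizerMonoidHom_mem_autSub {T P : Subgroup S} {g : S} (hgT : g ∈ T)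
    (hg : g ∈ normalizer (P : Set S)) : P.normalizerMonoidHom ⟨g, hg⟩ ∈ AutSub T P :=
  ⟨g, ⟨hgT, hg⟩, fun _ => rfl⟩

theorem autSub_le_autF (F : FusionSystemOn S S₀) {T P : Subgroup S} (hT : T ≤ S₀) (hP : P ≤ S₀) :
    AutSub T P ≤ F.AutF P hP := by
  rintro α ⟨g, hg, hga⟩
  have heq : (MulAut.conj g).toMonoidHom.comp P.subtype = P.subtype.comp α.toMonoidHom :=
    MonoidHom.ext fun x => (hga x).symm
  show P.subtype.comp α.toMonoidHom ∈ F.Hom P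
  exact heq ▸ F.conj_mem g (hT hg.1) P hP

theorem isPGroup_autSub (hS : IsPGroup p S) (T P : Subgroup S) : IsPGroup p (AutSub T P) := by
  refine ((hS.to_subgroup _).of_surjective _
    P.normalizerMonoidHom.rangeRestrict_surjective).to_le ?_
  rintro α ⟨g, hg, hga⟩
  exact ⟨⟨g, hg.2⟩, MulEquiv.ext fun x => Subtype.ext (hga x).symm⟩

theorem Receptive.exists_extension {F : FusionSystemOn S S₀} {P Q : Subgroup S}
    (hQ : F.Receptive Q) {e : P ≃* Q} (he : Q.subtype.comp e.toMonoidHom ∈ F.Hom P)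
    {T : Subgroup S} (hT : T ≤ S₀) (hPT : P ≤ T)
    (hconj : ∀ c ∈ AutSub T P, MulAut.congr e c ∈ AutSub S₀ Q) :
    ∃ ψ ∈ F.Hom (T ⊓ normalizer (P : Set S)),
      ∀ x : P, ψ (inclusion (le_inf hPT le_normalizer) x) = e x := by
  refine hQ P e he _ (le_inf hPT le_normalizer) fun g hg => ⟨hT hg.1, hg.2, ?_⟩
  obtain ⟨h, hh, hc⟩ := hconj _ (normalizerMonoidHom_mem_autSub hg.1 hg.2)
  refine ⟨h, hh, fun x hx => ?_⟩
  have := hc (e x)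
  simp only [MulAut.congr_apply, MulEquiv.trans_apply, MulEquiv.symm_apply_apply] at this
  exact this

theorem Saturated.exists_extension_to_normalizer [Finite S] [Fact p.Prime] (hS : IsPGroup p S)
    {F : FusionSystemOn S S₀} (hF : F.Saturated p) {P Q : Subgroup S} (hP : P ≤ S₀)
    (hPfn : F.FullyNormalized P) {e : Q ≃* P} (he : P.subtype.comp e.toMonoidHom ∈ F.Hom Q) :
    ∃ ψ ∈ F.Hom (S₀ ⊓ normalizer (Q : Set S)), ∀ x, ψ x ∈ normalizer (P : Set S) := by
  have hQ : Q ≤ S₀ := F.dom_le Q ⟨_, he⟩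
  obtain ⟨hfa, hrec⟩ := hF P hP hPfn
  have hDA : (AutSub S₀ Q).map (MulAut.congr e).toMonoidHom ≤ F.AutF P hP := by
    rintro _ ⟨c, hc, rfl⟩
    exact F.congr_mem_autF hQ hP he (F.autSub_le_autF le_rfl hQ hc)
  -- correct `e` by an element of `Aut_F(P)` so that it carries `Aut_{S₀}(Q)` into the Sylow
  -- subgroup `Aut_{S₀}(P)`; receptivity of `P` then applies
  obtain ⟨a, ha, hDU⟩ :=
    exists_mem_map_conj_le (isPGroup_autSub hS _ _) hfa hDA ((isPGroup_autSub hS _ _).map _)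
  obtain ⟨ψ, hψ, hψe⟩ := hrec.exists_extension (e := e.trans a) (F.trans_mem he ha) le_rfl hQ
    fun c hc => hDU ⟨_, ⟨c, hc, rfl⟩, rfl⟩
  exact ⟨ψ, hψ, fun x => MonoidHom.map_mem_normalizer_of_extends _ hψe x.2.2⟩

variable {F : FusionSystemOn S ⊤} {F₀ : FusionSystemOn S S₀}

namespace WeaklyNormal

theorem autF_le (hWN : WeaklyNormal p F F₀) {P : Subgroup S} (hP : P ≤ S₀) :
    F₀.AutF P hP ≤ F.AutF P le_top :=
  fun _ h => hWN.1 P h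

theorem le_of_iso (hWN : WeaklyNormal p F F₀) {P Q : Subgroup S} (hP : P ≤ S₀) {u : P ≃* Q}
    (hu : Q.subtype.comp u.toMonoidHom ∈ F.Hom P) : Q ≤ S₀ :=
  fun y hy => by simpa using hWN.2.1 P hP _ hu (u.symm ⟨y, hy⟩)

theorem congr_mem_autF₀ (hWN : WeaklyNormal p F F₀) {P Q : Subgroup S} (hP : P ≤ S₀)
    (hQ : Q ≤ S₀) {e : P ≃* Q} (he : Q.subtype.comp e.toMonoidHom ∈ F.Hom P) {β : MulAut P}
    (hβ : β ∈ F₀.AutF P hP) : MulAut.congr e β ∈ F₀.AutF Q hQ := by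
  set φ := Q.subtype.comp e.toMonoidHom
  have hinj : Function.Injective (φ.comp (inclusion le_rfl)) :=
    Subtype.coe_injective.comp e.injective
  -- `F`-invariance puts `e β e⁻¹` in `F₀` on the range of `e`, which is `Q`
  have hinv := hWN.2.2.2 P hP φ he (fun x => hQ (e x).2) P le_rfl _ hβ (fun x => (β x).2) hinj
  have hQR : Q ≤ (φ.comp (inclusion le_rfl)).range := fun y hy => ⟨e.symm ⟨y, hy⟩, by
    show ((e (e.symm ⟨y, hy⟩) : Q) : S) = y; simp⟩
  have hsymm : ∀ y : Q, (MonoidHom.ofInjective hinj).symm (inclusion hQR y) = e.symm y := by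
    intro y
    rw [MulEquiv.symm_apply_eq]
    ext
    show (y : S) = e (e.symm y)
    simp
  have heq : ((φ.comp ((P.subtype.comp β.toMonoidHom).codRestrict P fun x => (β x).2)).comp
      (MonoidHom.ofInjective hinj).symm.toMonoidHom).comp (inclusion hQR)
      = Q.subtype.comp (MulAut.congr e β).toMonoidHom := by
    ext y
    simp only [MonoidHom.comp_apply, MulEquiv.coe_toMonoidHom, hsymm]
    simp [φ, MulAut.congr_apply]
  show Q.subtype.comp (MulAut.congr e β).toMonoidHom ∈ F₀.Hom Q
  exact heq ▸ F₀.restrict_mem _ Q hQR _ hinv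

theorem autF_le_normalizer (hWN : WeaklyNormal p F F₀) {P : Subgroup S} (hP : P ≤ S₀) :
    F.AutF P le_top ≤ normalizer (F₀.AutF P hP : Set (MulAut P)) := by
  have key : ∀ β ∈ F.AutF P le_top, ∀ c ∈ F₀.AutF P hP, β * c * β⁻¹ ∈ F₀.AutF P hP :=
    fun β hβ c hc => hWN.congr_mem_autF₀ hP hP (e := β) hβ hc
  intro α hα
  refine mem_normalizer_iff.mpr fun c => ⟨key α hα c, fun h => ?_⟩
  simpa [mul_assoc] using key α⁻¹ ((F.AutF P le_top).inv_mem hα) _ h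

theorem fullyNormalized [Finite S] [Fact p.Prime] (hS : IsPGroup p S) (hF : F.Saturated p)
    (hWN : WeaklyNormal p F F₀) {Q : Subgroup S} (hQfn : F.FullyNormalized Q) :
    F₀.FullyNormalized Q := by
  intro R f hf
  obtain ⟨ψ, hψ, hψN⟩ :=
    hF.exists_extension_to_normalizer hS le_top hQfn (F.inv_mem Q R f (hWN.1 Q hf))
  have hle : S₀ ⊓ normalizer (R : Set S) ≤ ⊤ ⊓ normalizer (R : Set S) := inf_le_inf_right _ le_top
  have hres := F.restrict_mem _ _ hle ψ hψ
  exact Nat.card_le_card_of_injective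
    (fun x => ⟨ψ (inclusion hle x), hWN.2.1 _ inf_le_left _ hres x, hψN _⟩)
    fun x y hxy => F.inj _ _ hres (congrArg Subtype.val hxy)

theorem exists_pow_mem_autF₀_of_iso (hWN : WeaklyNormal p F F₀) {P Q : Subgroup S}
    (hP : P ≤ S₀) (hQ : Q ≤ S₀) {u : P ≃* Q} (hu : Q.subtype.comp u.toMonoidHom ∈ F.Hom P)
    (hQpow : ∀ β ∈ F.AutF Q le_top, ∃ n, β ^ p ^ n ∈ F₀.AutF Q hQ) :
    ∀ α ∈ F.AutF P le_top, ∃ n, α ^ p ^ n ∈ F₀.AutF P hP := by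
  intro α hα
  obtain ⟨n, hn⟩ := hQpow _ (F.congr_mem_autF le_top le_top hu hα)
  refine ⟨n, ?_⟩
  have := hWN.congr_mem_autF₀ hQ hP (F.inv_mem P Q u hu) hn
  have hback : MulAut.congr u.symm (MulAut.congr u (α ^ p ^ n)) = α ^ p ^ n := by
    ext; simp [MulAut.congr_apply]
  rwa [← map_pow, hback] at this

theorem exists_pow_mem_autF₀_of_fullyNormalized [Finite S] [Fact p.Prime] (hS : IsPGroup p S)
    (hF : F.Saturated p) (hWN : WeaklyNormal p F F₀) {Q : Subgroup S} (hQ : Q ≤ S₀)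
    (hQfn : F.FullyNormalized Q)
    (hN : ∀ α ∈ F.AutF (S₀ ⊓ normalizer (Q : Set S)) le_top,
      ∃ n, α ^ p ^ n ∈ F₀.AutF _ inf_le_left) :
    ∀ β ∈ F.AutF Q le_top, ∃ n, β ^ p ^ n ∈ F₀.AutF Q hQ := by
  have hsat₀ : F₀.Saturated p := hWN.2.2.1
  intro β hβ
  have hβN := hWN.autF_le_normalizer hQ hβ
  obtain ⟨b, hb, hγ⟩ := exists_mem_mul_mem_normalizer (F₀.autSub_le_autF le_rfl hQ)
    (isPGroup_autSub hS S₀ Q) (hsat₀ Q hQ (hWN.fullyNormalized hS hF hQfn)).1 hβN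
  obtain ⟨ψ, hψ, hψγ⟩ := (hF Q le_top hQfn).2.exists_extension (e := b * β)
    (Subgroup.mul_mem _ (hWN.autF_le hQ hb) hβ) (T := S₀) le_top hQ
    fun c hc => autSub_mono le_top Q ((mem_normalizer_iff.mp hγ c).mp hc)
  have hψN : ∀ x, ψ x ∈ S₀ ⊓ normalizer (Q : Set S) := fun x =>
    ⟨hWN.2.1 _ inf_le_left ψ hψ x, MonoidHom.map_mem_normalizer_of_extends _ hψγ x.2.2⟩
  obtain ⟨α, hα, hαψ⟩ := F.exists_autF_of_mem_hom le_top hψ hψN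
  have hsc : Function.Semiconj (inclusion (le_inf hQ le_normalizer)) ⇑(b * β) ⇑α :=
    fun x => Subtype.ext ((hαψ _).trans (hψγ x)).symm
  obtain ⟨n, hn⟩ := hN α hα
  refine ⟨n, ?_⟩
  have hγn := F₀.mem_autF_of_semiconj _ inf_le_left hn (MulAut.semiconj_pow hsc (p ^ n))
  -- `β ^ m` and `(b * β) ^ m` agree modulo `Aut_{F₀}(Q)`, which `β` normalizes
  have hdiff := mul_pow_mul_inv_pow_mem hβN hb (p ^ n)
  convert Subgroup.mul_mem _ ((F₀.AutF Q hQ).inv_mem hdiff) hγn using 1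
  group

theorem exists_pow_mem_autF₀ [Finite S] [Fact p.Prime] (hS : IsPGroup p S) (hF : F.Saturated p)
    (hWN : WeaklyNormal p F F₀)
    (hS₀ : ∀ α ∈ F.AutF S₀ le_top, ∃ n, α ^ p ^ n ∈ F₀.AutF S₀ le_rfl) {P : Subgroup S}
    (hP : P ≤ S₀) : ∀ α ∈ F.AutF P le_top, ∃ n, α ^ p ^ n ∈ F₀.AutF P hP := by
  induction h : Nat.card S₀ - Nat.card P using Nat.strong_induction_on generalizing P with
  | _ k IH =>
  obtain rfl | hlt := hP.eq_or_lt
  · exact hS₀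
  obtain ⟨Q, u, hu, hQfn⟩ := F.exists_fullyNormalized_iso (P := P) le_top
  have hQ := hWN.le_of_iso hP hu
  have hPS₀ : Nat.card P < Nat.card S₀ := Set.card_strictMono (SetLike.coe_strictMono hlt)
  have hPQ : Nat.card P = Nat.card Q := Nat.card_congr u.toEquiv
  have hQlt : Q < S₀ := hQ.lt_of_ne (by rintro rfl; exact hPS₀.ne hPQ)
  have hQN : Nat.card Q < Nat.card (S₀ ⊓ normalizer (Q : Set S) : Subgroup S) :=
    Set.card_strictMono (SetLike.coe_strictMono (hS.lt_inf_normalizer hQlt))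
  have hNS₀ := Subgroup.card_le_of_le (inf_le_left : S₀ ⊓ normalizer (Q : Set S) ≤ S₀)
  exact hWN.exists_pow_mem_autF₀_of_iso hP hQ hu
    (hWN.exists_pow_mem_autF₀_of_fullyNormalized hS hF hQ hQfn (IH _ (by omega) inf_le_left rfl))

end WeaklyNormal

end FusionSystemOn

open FusionSystemOn in
/-- Lemma 4.1: Let `F` be a saturated fusion system over a finite
`p`-group `S` and `F₀` a weakly normal subsystem of `F` over `S₀ ≤ S`.
If `O^p(Aut_F(S₀)) ≤ Aut_{F₀}(S₀)`, then `O^p(Aut_F(P)) ≤ Aut_{F₀}(P)` for all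
`P ≤ S₀`. -/
theorem stmt11 {S : Type*} [Group S] [Finite S] (p : ℕ) [Fact p.Prime]
    (hS : IsPGroup p S) (S₀ : Subgroup S)
    (F : FusionSystemOn S (⊤ : Subgroup S)) (hFsat : F.Saturated p)
    (F₀ : FusionSystemOn S S₀) (hWN : WeaklyNormal p F F₀)
    (hS₀ : (pResidual p ↥(F.AutF S₀ le_top)).map (F.AutF S₀ le_top).subtype
      ≤ F₀.AutF S₀ le_rfl) :
    ∀ (P : Subgroup S) (hP : P ≤ S₀),
      (pResidual p ↥(F.AutF P le_top)).map (F.AutF P le_top).subtype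
        ≤ F₀.AutF P hP := by
  have hbase : ∀ α ∈ F.AutF S₀ le_top, ∃ n, α ^ p ^ n ∈ F₀.AutF S₀ le_rfl := fun α hα => by
    obtain ⟨n, hn⟩ := exists_pow_mem_pResidual (p := p) (⟨α, hα⟩ : F.AutF S₀ le_top)
    exact ⟨n, hS₀ ⟨_, hn, rfl⟩⟩
  intro P hP
  have hnormal : ((F₀.AutF P hP).subgroupOf (F.AutF P le_top)).Normal :=
    (normal_subgroupOf_iff_le_normalizer (hWN.autF_le hP)).mpr (hWN.autF_le_normalizer hP)
  refine map_le_iff_le_comap.mpr (pResidual_le hnormal fun α => ?_)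
  obtain ⟨n, hn⟩ := hWN.exists_pow_mem_autF₀ hS hFsat hbase hP α α.2
  exact ⟨n, by simpa [mem_subgroupOf] using hn⟩
end
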